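/- Under the assumptions of the block gossip model (r1, r2 ≥ 1, at least one stubborn agent, w_s, w_d > 0, w_s(n1²+n2²) + 2 w_d n1 n2 = 1), the spectral radius of the expected regular-agent update matrix A̅ is strictly less than 1, so that I - A̅ is invertible. -/

import Mathlib

/-!
All entries of `A̅` are nonnegative (the normalisation of the weights makes the diagonal
nonnegative), and the row of a regular agent in community `i` sums to
`1 - w_s (n_i - r_i) - w_d (n_j - r_j)`, which is `< 1` because some agent is stubborn.
Hence the `∞`-operator norm of `A̅` (maximal absolute row sum) is `< 1`; it bounds the
spectrum and makes the Neumann series for `(I - A̅)⁻¹` converge.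
-/

open Matrix BigOperators

/-- The expected regular-agent update matrix `A̅` of the two-community block gossip model. -/
def Abar (n1 n2 r1 r2 : ℕ) (ws wd : ℝ) :
    Matrix (Fin (r1 + r2)) (Fin (r1 + r2)) ℝ :=
  fun k l =>
    if (k : ℕ) < r1 then
      if (l : ℕ) < r1 then (if k = l then 1 - ws * n1 - wd * n2 else 0) + ws
      else wd
    else
      if (l : ℕ) < r1 then wd
      else (if k = l then 1 - ws * n2 - wd * n1 else 0) + ws

attribute [local instance] Matrix.linftyOpNormedAddCommGroup Matrix.linftyOpNormedRing
  Matrix.linftyOpNormedAlgebra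

namespace Matrix

variable {m n : Type*} [Fintype m] [Fintype n]

theorem linfty_opNorm_lt_of_forall_sum_norm_lt {α : Type*} [NormedAddCommGroup α]
    {A : Matrix m n α} {r : ℝ} (hr : 0 < r) (h : ∀ i, ∑ j, ‖A i j‖ < r) : ‖A‖ < r := by
  lift r to NNReal using hr.le
  rw [linfty_opNorm_def, NNReal.coe_lt_coe, Finset.sup_lt_iff (by exact_mod_cast hr)]
  intro i _
  rw [← NNReal.coe_lt_coe, NNReal.coe_sum]
  exact h i

theorem linfty_opNorm_one_le [DecidableEq n] {α : Type*} [NormedRing α] [NormOneClass α] :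
    ‖(1 : Matrix n n α)‖ ≤ 1 := by
  rw [← diagonal_one, linfty_opNorm_diagonal]
  exact (pi_norm_const_le 1).trans norm_one.le

theorem norm_le_linfty_opNorm_of_mem_spectrum [DecidableEq n] {𝕜 : Type*}
    [NontriviallyNormedField 𝕜] [CompleteSpace 𝕜] {A : Matrix n n 𝕜} {μ : 𝕜}
    (hμ : μ ∈ spectrum 𝕜 A) : ‖μ‖ ≤ ‖A‖ := by
  -- The global uniform structure on `Matrix` is not reducibly the `linfty` one.
  have : @CompleteSpace (Matrix n n 𝕜) Matrix.linftyOpNormedRing.toUniformSpace :=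
    FiniteDimensional.complete 𝕜 _
  exact (spectrum.norm_le_norm_mul_of_mem hμ).trans
    (mul_le_of_le_one_right (norm_nonneg A) linfty_opNorm_one_le)

end Matrix

section OrderedField

variable {α : Type*} [Field α] [LinearOrder α] [IsStrictOrderedRing α]

theorem one_sub_mul_sub_mul_nonneg {ws wd a b : α} (hws : 0 ≤ ws) (hwd : 0 ≤ wd) (ha : 1 ≤ a)
    (hb : 0 ≤ b) (hnorm : ws * (a ^ 2 + b ^ 2) + 2 * wd * a * b = 1) :
    0 ≤ 1 - ws * a - wd * b := by
  -- `ws a ≤ ws a²` and `wd b ≤ 2 wd a b` because `1 ≤ a`.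
  nlinarith [mul_nonneg hws (mul_nonneg (sub_nonneg.2 ha) (zero_le_one.trans ha)),
    mul_nonneg hwd (mul_nonneg (by linarith : 0 ≤ 2 * a - 1) hb), mul_nonneg hws (sq_nonneg b)]

theorem mul_add_mul_pos_of_add_pos {a b x y : α} (ha : 0 < a) (hb : 0 < b) (hx : 0 ≤ x)
    (hy : 0 ≤ y) (hxy : 0 < x + y) : 0 < a * x + b * y := by
  nlinarith [mul_le_mul_of_nonneg_right (min_le_left a b) hx,
    mul_le_mul_of_nonneg_right (min_le_right a b) hy, mul_pos (lt_min ha hb) hxy]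

end OrderedField

section Abar

variable {n1 n2 r1 r2 : ℕ} {ws wd : ℝ}

theorem Abar_row_sum_of_lt {k : Fin (r1 + r2)} (hk : (k : ℕ) < r1) :
    ∑ l, Abar n1 n2 r1 r2 ws wd k l = 1 - ws * (n1 - r1) - wd * (n2 - r2) := by
  have hdiag (l : Fin r1) : k = Fin.castAdd r2 l ↔ l = ⟨k, hk⟩ := by
    simp [Fin.ext_iff, eq_comm]
  simp [Fin.sum_univ_add, Abar, hk, hdiag, Finset.sum_add_distrib]
  ring

theorem Abar_row_sum_of_le {k : Fin (r1 + r2)} (hk : r1 ≤ (k : ℕ)) :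
    ∑ l, Abar n1 n2 r1 r2 ws wd k l = 1 - ws * (n2 - r2) - wd * (n1 - r1) := by
  have hdiag (l : Fin r2) : k = Fin.natAdd r1 l ↔ l = ⟨k - r1, by omega⟩ := by
    simp [Fin.ext_iff]
    omega
  simp [Fin.sum_univ_add, Abar, hk.not_gt, hdiag, Finset.sum_add_distrib]
  ring

theorem Abar_nonneg (h1 : r1 ≤ n1) (h2 : r2 ≤ n2) (hws : 0 ≤ ws) (hwd : 0 ≤ wd)
    (hnorm : ws * ((n1 : ℝ) ^ 2 + (n2 : ℝ) ^ 2) + 2 * wd * n1 * n2 = 1)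
    (k l : Fin (r1 + r2)) : 0 ≤ Abar n1 n2 r1 r2 ws wd k l := by
  rcases lt_or_ge (k : ℕ) r1 with hk | hk
  · have hdiag : 0 ≤ 1 - ws * n1 - wd * n2 :=
      one_sub_mul_sub_mul_nonneg hws hwd (by exact_mod_cast (by omega : 1 ≤ n1))
        n2.cast_nonneg hnorm
    simp only [Abar, hk, if_true]
    split_ifs <;> linarith
  · have hdiag : 0 ≤ 1 - ws * n2 - wd * n1 :=
      one_sub_mul_sub_mul_nonneg hws hwd (by exact_mod_cast (by omega : 1 ≤ n2))
        n1.cast_nonneg (by linarith)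
    simp only [Abar, hk.not_gt, if_false]
    split_ifs <;> linarith

theorem Abar_sum_norm_row_lt_one (h1 : r1 ≤ n1) (h2 : r2 ≤ n2) (hs : r1 + r2 < n1 + n2)
    (hws : 0 < ws) (hwd : 0 < wd)
    (hnorm : ws * ((n1 : ℝ) ^ 2 + (n2 : ℝ) ^ 2) + 2 * wd * n1 * n2 = 1)
    (k : Fin (r1 + r2)) : ∑ l, ‖Abar n1 n2 r1 r2 ws wd k l‖ < 1 := by
  simp_rw [Real.norm_of_nonneg (Abar_nonneg h1 h2 hws.le hwd.le hnorm k _)]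
  have hx : (0 : ℝ) ≤ n1 - r1 := sub_nonneg.2 (by exact_mod_cast h1)
  have hy : (0 : ℝ) ≤ n2 - r2 := sub_nonneg.2 (by exact_mod_cast h2)
  have hxy : (0 : ℝ) < (n1 - r1) + (n2 - r2) := by
    have : (r1 : ℝ) + r2 < n1 + n2 := by exact_mod_cast hs
    linarith
  rcases lt_or_ge (k : ℕ) r1 with hk | hk
  · rw [Abar_row_sum_of_lt hk]
    linarith [mul_add_mul_pos_of_add_pos hws hwd hx hy hxy]
  · rw [Abar_row_sum_of_le hk]
    linarith [mul_add_mul_pos_of_add_pos hws hwd hy hx (by linarith)]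

end Abar

theorem stmt_5_general (n1 n2 r1 r2 : ℕ)
    (h1 : r1 ≤ n1) (h2 : r2 ≤ n2) (hs : r1 + r2 < n1 + n2)
    (ws wd : ℝ) (hws : 0 < ws) (hwd : 0 < wd)
    (hnorm : ws * ((n1 : ℝ)^2 + (n2 : ℝ)^2) + 2 * wd * n1 * n2 = 1) :
    (∀ μ ∈ spectrum ℂ ((Abar n1 n2 r1 r2 ws wd).map Complex.ofReal), ‖μ‖ < 1) ∧
    IsUnit (1 - Abar n1 n2 r1 r2 ws wd) := by
  have hrow := Abar_sum_norm_row_lt_one h1 h2 hs hws hwd hnorm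
  refine ⟨fun μ hμ ↦ (norm_le_linfty_opNorm_of_mem_spectrum hμ).trans_lt ?_,
    isUnit_one_sub_of_norm_lt_one (linfty_opNorm_lt_of_forall_sum_norm_lt one_pos hrow)⟩
  refine linfty_opNorm_lt_of_forall_sum_norm_lt one_pos fun k ↦ ?_
  simpa only [map_apply, Complex.norm_real] using hrow k

/-- The spectral radius of `A̅` is strictly less than one, hence `I - A̅` is invertible. -/
theorem stmt_5 (n1 n2 r1 r2 : ℕ) (hr1 : 1 ≤ r1) (hr2 : 1 ≤ r2)
    (h1 : r1 ≤ n1) (h2 : r2 ≤ n2) (hs : r1 + r2 < n1 + n2)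
    (ws wd : ℝ) (hws : 0 < ws) (hwd : 0 < wd)
    (hnorm : ws * ((n1 : ℝ)^2 + (n2 : ℝ)^2) + 2 * wd * n1 * n2 = 1) :
    (∀ μ ∈ spectrum ℂ ((Abar n1 n2 r1 r2 ws wd).map Complex.ofReal), ‖μ‖ < 1) ∧
    IsUnit (1 - Abar n1 n2 r1 r2 ws wd) :=
  stmt_5_general n1 n2 r1 r2 h1 h2 hs ws wd hws hwd hnorm
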